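/- arXiv:1609.09056 — 3 statements merged into one kernel-verified Lean document; each statement's English description precedes it below -/
import Mathlib

section
/- Let ψ and φ be real-valued Schwartz functions on ℝ^d and let F be a real-valued Schwartz function on ℝ^{2d}. If φ ≥ 0 everywhere or ψ ≥ 0 everywhere, then Θ_{ψ,φ}(F) ≥ 0. -/
/-!
For fixed `t`, `p`, `q` the six inner integrals are nonnegative. If `ψ ≥ 0`, integrating first in
`y'` and then in `x'` factors the integrand as `ψ_t(x - q) ψ_t(y - q) (∫ F(x,x') F(y,x') φ_t(x'-p) dx')²`.
If `φ ≥ 0`, Fubini (the integrand is a bounded function times a product of integrable ones) lets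
the pair `(x', y')` be integrated last, and the same factorization applies with roles exchanged.
-/

open MeasureTheory Function

/-- `L¹`-normalized dilate `f_t(x) = t^{-d} f(t^{-1} x)`. -/
noncomputable def dil {d : ℕ} (t : ℝ) (f : (Fin d → ℝ) → ℝ) : (Fin d → ℝ) → ℝ :=
  fun x => (t ^ d)⁻¹ * f (t⁻¹ • x)

/-- The singular integral form `Θ_{ψ,φ}(F)`. -/
noncomputable def Theta {d : ℕ} (ψ φ : (Fin d → ℝ) → ℝ)
    (F : (Fin d → ℝ) × (Fin d → ℝ) → ℝ) : ℝ :=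
  ∫ t in Set.Ioi (0 : ℝ),
    (∫ q : Fin d → ℝ, ∫ p : Fin d → ℝ, ∫ x : Fin d → ℝ, ∫ y : Fin d → ℝ,
      ∫ x' : Fin d → ℝ, ∫ y' : Fin d → ℝ,
        F (x, x') * F (x, y') * F (y, x') * F (y, y') *
          dil t ψ (x - q) * dil t ψ (y - q) * dil t φ (x' - p) * dil t φ (y' - p)) / t

section Fubini

variable {α₁ α₂ α₃ α₄ E : Type*} [MeasurableSpace α₁] [MeasurableSpace α₂] [MeasurableSpace α₃]
  [MeasurableSpace α₄] {μ₁ : Measure α₁} {μ₂ : Measure α₂} {μ₃ : Measure α₃} {μ₄ : Measure α₄}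
  [SFinite μ₁] [SFinite μ₂] [SFinite μ₃] [SFinite μ₄] [NormedAddCommGroup E] [NormedSpace ℝ E]

theorem integral_integral_integral_integral {f : α₁ → α₂ → α₃ → α₄ → E}
    (hf : Integrable (fun z => f z.1.1 z.1.2 z.2.1 z.2.2) ((μ₁.prod μ₂).prod (μ₃.prod μ₄))) :
    ∫ a, ∫ b, ∫ c, ∫ d, f a b c d ∂μ₄ ∂μ₃ ∂μ₂ ∂μ₁
      = ∫ z, f z.1.1 z.1.2 z.2.1 z.2.2 ∂(μ₁.prod μ₂).prod (μ₃.prod μ₄) := by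
  have inner : ∀ᵐ w ∂μ₁.prod μ₂, ∫ c, ∫ d, f w.1 w.2 c d ∂μ₄ ∂μ₃
      = ∫ v, f w.1 w.2 v.1 v.2 ∂μ₃.prod μ₄ :=
    hf.prod_right_ae.mono fun _ hw => integral_integral hw
  calc ∫ a, ∫ b, ∫ c, ∫ d, f a b c d ∂μ₄ ∂μ₃ ∂μ₂ ∂μ₁
      = ∫ a, ∫ b, ∫ v, f a b v.1 v.2 ∂μ₃.prod μ₄ ∂μ₂ ∂μ₁ :=
        integral_congr_ae <| (Measure.ae_ae_of_ae_prod inner).mono fun _ ha =>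
          integral_congr_ae ha
    _ = ∫ z, f z.1.1 z.1.2 z.2.1 z.2.2 ∂(μ₁.prod μ₂).prod (μ₃.prod μ₄) :=
        (integral_integral hf.integral_prod_left).trans (integral_prod _ hf).symm

theorem integral_integral_integral_integral_swap {f : α₁ → α₂ → α₃ → α₄ → E}
    (hf : Integrable (fun z => f z.1.1 z.1.2 z.2.1 z.2.2) ((μ₁.prod μ₂).prod (μ₃.prod μ₄))) :
    ∫ a, ∫ b, ∫ c, ∫ d, f a b c d ∂μ₄ ∂μ₃ ∂μ₂ ∂μ₁
      = ∫ c, ∫ d, ∫ a, ∫ b, f a b c d ∂μ₂ ∂μ₁ ∂μ₄ ∂μ₃ := by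
  rw [integral_integral_integral_integral hf,
    integral_integral_integral_integral (f := fun c d a b => f a b c d) hf.swap]
  exact (integral_prod_swap _).symm

end Fubini

section Box

variable {α β : Type*} [MeasurableSpace β] {ν : Measure β}

theorem integral_integral_box_eq_mul_sq (b : α → β → ℝ) (s : α → ℝ) (u : β → ℝ) (x y : α) :
    ∫ x', ∫ y', b x x' * b x y' * b y x' * b y y' * s x * s y * u x' * u y' ∂ν ∂ν
      = s x * s y * (∫ x', b x x' * b y x' * u x' ∂ν) ^ 2 := by
  have inner : ∀ x', ∫ y', b x x' * b x y' * b y x' * b y y' * s x * s y * u x' * u y' ∂ν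
      = b x x' * b y x' * u x' * (s x * s y) * ∫ y', b x y' * b y y' * u y' ∂ν := fun x' => by
    rw [← integral_const_mul]
    congr 1 with y'
    ring
  simp_rw [inner, integral_mul_const]
  ring

variable [MeasurableSpace α] {μ : Measure α}

theorem box_integral_nonneg (b : α → β → ℝ) {s : α → ℝ} (u : β → ℝ) (hs : ∀ x, 0 ≤ s x) :
    0 ≤ ∫ x, ∫ y, ∫ x', ∫ y',
      b x x' * b x y' * b y x' * b y y' * s x * s y * u x' * u y' ∂ν ∂ν ∂μ ∂μ := by
  refine integral_nonneg fun x => integral_nonneg fun y => ?_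
  rw [integral_integral_box_eq_mul_sq]
  exact mul_nonneg (mul_nonneg (hs x) (hs y)) (sq_nonneg _)

theorem integrable_box {b : α → β → ℝ} (hb : Measurable (uncurry b)) {C : ℝ}
    (hC : ∀ x x', |b x x'| ≤ C) {s : α → ℝ} {u : β → ℝ} (hs : Integrable s μ)
    (hu : Integrable u ν) :
    Integrable (fun z : (α × α) × (β × β) =>
      b z.1.1 z.2.1 * b z.1.1 z.2.2 * b z.1.2 z.2.1 * b z.1.2 z.2.2 *
        s z.1.1 * s z.1.2 * u z.2.1 * u z.2.2) ((μ.prod μ).prod (ν.prod ν)) := by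
  have hb' : ∀ {f : (α × α) × (β × β) → α} {g : (α × α) × (β × β) → β},
      Measurable f → Measurable g → Measurable fun z => b (f z) (g z) :=
    fun hf hg => hb.comp (hf.prodMk hg)
  have bounded : Integrable (fun z : (α × α) × (β × β) =>
      b z.1.1 z.2.1 * b z.1.1 z.2.2 * b z.1.2 z.2.1 * b z.1.2 z.2.2 *
        ((s z.1.1 * s z.1.2) * (u z.2.1 * u z.2.2))) ((μ.prod μ).prod (ν.prod ν)) := by
    refine ((hs.mul_prod hs).mul_prod (hu.mul_prod hu)).bdd_mul (c := C ^ 4) ?_ ?_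
    · exact (((hb' (by fun_prop) (by fun_prop)).mul (hb' (by fun_prop) (by fun_prop))).mul
        (hb' (by fun_prop) (by fun_prop)) |>.mul (hb' (by fun_prop) (by fun_prop))).aestronglyMeasurable
    · refine Filter.Eventually.of_forall fun z => ?_
      have hC₀ : 0 ≤ C := (abs_nonneg _).trans (hC z.1.1 z.2.1)
      simp only [norm_mul, Real.norm_eq_abs]
      calc |b z.1.1 z.2.1| * |b z.1.1 z.2.2| * |b z.1.2 z.2.1| * |b z.1.2 z.2.2|
          ≤ C * C * C * C := by gcongr <;> exact hC _ _
        _ = C ^ 4 := by ring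
  exact bounded.congr (Filter.Eventually.of_forall fun z => by ring)

theorem box_integral_nonneg_of_nonneg_right [SFinite μ] [SFinite ν] {b : α → β → ℝ}
    (hb : Measurable (uncurry b)) {C : ℝ} (hC : ∀ x x', |b x x'| ≤ C) {s : α → ℝ} {u : β → ℝ}
    (hs : Integrable s μ) (hu : Integrable u ν) (hu_nonneg : ∀ x', 0 ≤ u x') :
    0 ≤ ∫ x, ∫ y, ∫ x', ∫ y',
      b x x' * b x y' * b y x' * b y y' * s x * s y * u x' * u y' ∂ν ∂ν ∂μ ∂μ := by
  rw [integral_integral_integral_integral_swap (integrable_box hb hC hs hu)]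
  convert box_integral_nonneg (μ := ν) (ν := μ) (fun x' x => b x x') s hu_nonneg using 9
  ring

end Box

section Dilation

variable {d : ℕ}

theorem integrable_dil {ψ : (Fin d → ℝ) → ℝ} (hψ : Integrable ψ) {t : ℝ} (ht : t ≠ 0) :
    Integrable (dil t ψ) :=
  ((integrable_comp_smul_iff volume ψ (inv_ne_zero ht)).2 hψ).const_mul _

theorem dil_nonneg {ψ : (Fin d → ℝ) → ℝ} (hψ : ∀ x, 0 ≤ ψ x) {t : ℝ} (ht : 0 ≤ t)
    (x : Fin d → ℝ) : 0 ≤ dil t ψ x :=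
  mul_nonneg (inv_nonneg.2 (pow_nonneg ht d)) (hψ _)

end Dilation

theorem Theta_nonneg (d : ℕ) (ψ φ : SchwartzMap (Fin d → ℝ) ℝ)
    (F : SchwartzMap ((Fin d → ℝ) × (Fin d → ℝ)) ℝ)
    (h : (∀ x, 0 ≤ φ x) ∨ (∀ x, 0 ≤ ψ x)) :
    0 ≤ Theta (fun x => ψ x) (fun x => φ x) (fun z => F z) := by
  refine setIntegral_nonneg measurableSet_Ioi fun t (ht : 0 < t) => div_nonneg ?_ ht.le
  refine integral_nonneg fun q => integral_nonneg fun p => ?_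
  rcases h with hφ | hψ
  · exact box_integral_nonneg_of_nonneg_right (b := fun x x' => F (x, x'))
      F.continuous.measurable (C := SchwartzMap.seminorm ℝ 0 0 F)
      (fun x x' => F.norm_le_seminorm ℝ (x, x'))
      ((integrable_dil ψ.integrable ht.ne').comp_sub_right q)
      ((integrable_dil φ.integrable ht.ne').comp_sub_right p)
      (fun x' => dil_nonneg hφ ht.le _)
  · exact box_integral_nonneg (fun x x' => F (x, x')) _ fun x => dil_nonneg hψ ht.le _
end

section
/- For every real ν > 0 there exist constants 0 < c ≤ C < ∞, depending only on ν, such that for every integer d ≥ 1 and every x ∈ ℝ^d one has c (1+‖x‖)^{−ν} ≤ ∫₁^∞ e^{−π β^{−2} ‖x‖²} β^{−ν−1} dβ ≤ C (1+‖x‖)^{−ν}, where ‖·‖ denotes the Euclidean norm on ℝ^d. -/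
/-!
Write `r = ‖x‖` and `w(β) = exp (-π r² / β²) β^(-ν-1)`. The Gaussian factor is at most `1`, and at
least `e^(-π)` once `β ≥ r`; integrating `β^(-ν-1)` then gives the lower bound
`e^(-π) max(1, r)^(-ν) / ν` and the upper bounds `1 / ν` on `(1, ∞)` and `r^(-ν) / ν` on `(r, ∞)`.
For `r ≥ 1` the remaining piece over `(1, r]` is controlled by `e^(-u) ≤ n! / u^n` with `2n > ν`,
which bounds `w(β)` by `n! (π r²)^(-n) β^(2n-ν-1)`, whose integral up to `r` is `O(r^(-ν))`.
Finally `max(1, r)` and `1 + r` agree up to a factor `2`.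
-/

open MeasureTheory Set Real
open scoped Nat

noncomputable def gaussianWeight (ν s β : ℝ) : ℝ :=
  exp (-π * β⁻¹ ^ 2 * s) * β ^ (-ν - 1)

lemma exp_neg_le_factorial_div_pow {u : ℝ} (hu : 0 < u) (n : ℕ) : exp (-u) ≤ n ! / u ^ n := by
  rw [exp_neg, ← inv_div]
  exact inv_anti₀ (by positivity) (pow_div_factorial_le_exp u hu.le n)

lemma integral_Ioi_rpow_neg_sub_one {ν c : ℝ} (hν : 0 < ν) (hc : 0 < c) :
    ∫ β in Ioi c, β ^ (-ν - 1) = c ^ (-ν) / ν := by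
  rw [integral_Ioi_rpow_of_lt (by linarith) hc, sub_add_cancel, neg_div_neg_eq]

section gaussianWeight

variable {ν r β : ℝ}

lemma gaussianWeight_nonneg (hβ : 0 ≤ β) (s : ℝ) : 0 ≤ gaussianWeight ν s β :=
  mul_nonneg (exp_nonneg _) (rpow_nonneg hβ _)

lemma gaussianWeight_le_rpow {s : ℝ} (hs : 0 ≤ s) (hβ : 0 ≤ β) :
    gaussianWeight ν s β ≤ β ^ (-ν - 1) := by
  refine mul_le_of_le_one_left (rpow_nonneg hβ _) (exp_le_one_iff.mpr ?_)
  have : 0 ≤ π * β⁻¹ ^ 2 * s := by positivity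
  linarith

lemma exp_neg_pi_mul_rpow_le_gaussianWeight (hr : 0 ≤ r) (hrβ : r ≤ β) :
    exp (-π) * β ^ (-ν - 1) ≤ gaussianWeight ν (r ^ 2) β := by
  have hβ : 0 ≤ β := hr.trans hrβ
  refine mul_le_mul_of_nonneg_right (exp_le_exp.mpr ?_) (rpow_nonneg hβ _)
  have : β⁻¹ ^ 2 * r ^ 2 ≤ 1 := by
    rw [← mul_pow]
    exact pow_le_one₀ (by positivity) (inv_mul_le_one_of_le₀ hrβ hβ)
  have := mul_le_mul_of_nonneg_left this pi_pos.le
  linarith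

lemma gaussianWeight_le_factorial_mul_rpow (hr : 0 < r) (hβ : 0 < β) (n : ℕ) :
    gaussianWeight ν (r ^ 2) β ≤ n ! / (π * r ^ 2) ^ n * β ^ (2 * n - ν - 1 : ℝ) := by
  have hexp := exp_neg_le_factorial_div_pow (u := π * β⁻¹ ^ 2 * r ^ 2) (by positivity) n
  have hpow : β ^ (2 * n - ν - 1 : ℝ) = β ^ (2 * n) * β ^ (-ν - 1) := by
    rw [show (2 * n - ν - 1 : ℝ) = ((2 * n : ℕ) : ℝ) + (-ν - 1) by push_cast; ring,
      rpow_add hβ, rpow_natCast]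
  calc gaussianWeight ν (r ^ 2) β
      ≤ n ! / (π * β⁻¹ ^ 2 * r ^ 2) ^ n * β ^ (-ν - 1) :=
        mul_le_mul_of_nonneg_right (by rwa [neg_mul, neg_mul]) (rpow_nonneg hβ.le _)
    _ = n ! / (π * r ^ 2) ^ n * β ^ (2 * n - ν - 1 : ℝ) := by
        rw [hpow, mul_right_comm, mul_pow _ (β⁻¹ ^ 2), inv_pow, inv_pow, ← pow_mul]
        field_simp

lemma continuousOn_gaussianWeight (s : ℝ) : ContinuousOn (gaussianWeight ν s) (Ioi 0) := by
  intro β hβ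
  have hβ : β ≠ 0 := (mem_Ioi.mp hβ).ne'
  refine ContinuousAt.continuousWithinAt ?_
  unfold gaussianWeight
  have : ContinuousAt (fun β : ℝ => β ^ (-ν - 1)) β := continuousAt_id.rpow_const (Or.inl hβ)
  fun_prop (disch := assumption)

lemma integrableOn_gaussianWeight (hν : 0 < ν) {s : ℝ} (hs : 0 ≤ s) :
    IntegrableOn (gaussianWeight ν s) (Ioi 1) := by
  refine (integrableOn_Ioi_rpow_of_lt (by linarith : -ν - 1 < -1) one_pos).mono'
    ((continuousOn_gaussianWeight s).aestronglyMeasurable measurableSet_Ioi |>.mono_set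
      (Ioi_subset_Ioi zero_le_one)) ?_
  filter_upwards [ae_restrict_mem measurableSet_Ioi] with β hβ
  have hβ : (0 : ℝ) ≤ β := zero_le_one.trans (le_of_lt hβ)
  rw [norm_of_nonneg (gaussianWeight_nonneg hβ s)]
  exact gaussianWeight_le_rpow hs hβ

end gaussianWeight

section integral

variable {ν r : ℝ}

lemma exp_neg_pi_div_mul_rpow_le_integral_gaussianWeight (hν : 0 < ν) (hr : 0 ≤ r) :
    exp (-π) / ν * max 1 r ^ (-ν) ≤ ∫ β in Ioi 1, gaussianWeight ν (r ^ 2) β := by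
  set M := max 1 r
  have hM : 0 < M := one_pos.trans_le (le_max_left 1 r)
  calc exp (-π) / ν * M ^ (-ν) = ∫ β in Ioi M, exp (-π) * β ^ (-ν - 1) := by
        rw [integral_const_mul, integral_Ioi_rpow_neg_sub_one hν hM]
        ring
    _ ≤ ∫ β in Ioi M, gaussianWeight ν (r ^ 2) β := by
        refine setIntegral_mono_on ((integrableOn_Ioi_rpow_of_lt (by linarith) hM).const_mul _)
          ((integrableOn_gaussianWeight hν (sq_nonneg r)).mono_set
            (Ioi_subset_Ioi (le_max_left 1 r))) measurableSet_Ioi fun β hβ => ?_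
        exact exp_neg_pi_mul_rpow_le_gaussianWeight hr ((le_max_right 1 r).trans (le_of_lt hβ))
    _ ≤ ∫ β in Ioi 1, gaussianWeight ν (r ^ 2) β := by
        refine setIntegral_mono_set (integrableOn_gaussianWeight hν (sq_nonneg r)) ?_
          (Ioi_subset_Ioi (le_max_left 1 r)).eventuallyLE
        filter_upwards [ae_restrict_mem measurableSet_Ioi] with β hβ
        exact gaussianWeight_nonneg (zero_le_one.trans (le_of_lt hβ)) _

lemma integral_gaussianWeight_le_rpow {s : ℝ} (hν : 0 < ν) (hs : 0 ≤ s) {c : ℝ} (hc : 1 ≤ c) :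
    ∫ β in Ioi c, gaussianWeight ν s β ≤ c ^ (-ν) / ν := by
  have hc0 : 0 < c := one_pos.trans_le hc
  rw [← integral_Ioi_rpow_neg_sub_one hν hc0]
  exact setIntegral_mono_on
    ((integrableOn_gaussianWeight hν hs).mono_set (Ioi_subset_Ioi hc))
    (integrableOn_Ioi_rpow_of_lt (by linarith) hc0) measurableSet_Ioi
    fun β hβ => gaussianWeight_le_rpow hs (hc0.trans hβ).le

lemma integral_Ioc_gaussianWeight_le {n : ℕ} (hn : ν < 2 * n) (hr : 1 ≤ r) :
    ∫ β in Ioc 1 r, gaussianWeight ν (r ^ 2) β ≤ n ! / π ^ n / (2 * n - ν) * r ^ (-ν) := by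
  have hr0 : 0 < r := one_pos.trans_le hr
  set K : ℝ := n ! / (π * r ^ 2) ^ n with hK
  have hbound : IntegrableOn (fun β : ℝ => K * β ^ (2 * n - ν - 1 : ℝ)) (Ioc 1 r) := by
    refine (ContinuousOn.integrableOn_Icc ?_).mono_set Ioc_subset_Icc_self
    exact continuousOn_const.mul
      (continuousOn_id.rpow_const fun β hβ => Or.inl (one_pos.trans_le hβ.1).ne')
  calc ∫ β in Ioc 1 r, gaussianWeight ν (r ^ 2) β
      ≤ ∫ β in Ioc 1 r, K * β ^ (2 * n - ν - 1 : ℝ) := by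
        have hweight : ContinuousOn (gaussianWeight ν (r ^ 2)) (Icc 1 r) :=
          (continuousOn_gaussianWeight _).mono fun β hβ => one_pos.trans_le hβ.1
        refine setIntegral_mono_on (hweight.integrableOn_Icc.mono_set Ioc_subset_Icc_self) hbound
          measurableSet_Ioc fun β hβ => ?_
        exact gaussianWeight_le_factorial_mul_rpow hr0 (one_pos.trans hβ.1) n
    _ = K * ((r ^ (2 * n - ν : ℝ) - 1) / (2 * n - ν)) := by
        rw [integral_const_mul, ← intervalIntegral.integral_of_le hr,
          integral_rpow (Or.inl (by linarith)), sub_add_cancel, one_rpow]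
    _ ≤ K * (r ^ (2 * n - ν : ℝ) / (2 * n - ν)) := by
        gcongr
        linarith
    _ = n ! / π ^ n / (2 * n - ν) * r ^ (-ν) := by
        rw [show (2 * n - ν : ℝ) = ((2 * n : ℕ) : ℝ) + -ν by push_cast; ring, rpow_add hr0,
          rpow_natCast, hK]
        field_simp
        ring

lemma integral_gaussianWeight_le_max_one_rpow {n : ℕ} (hν : 0 < ν) (hn : ν < 2 * n) :
    ∫ β in Ioi 1, gaussianWeight ν (r ^ 2) β ≤
      (n ! / π ^ n / (2 * n - ν) + 1 / ν) * max 1 r ^ (-ν) := by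
  have hK : 0 ≤ (n ! / π ^ n / (2 * n - ν) : ℝ) :=
    div_nonneg (by positivity) (by linarith)
  rcases le_total r 1 with hr1 | hr1
  · rw [max_eq_left hr1, one_rpow, mul_one]
    calc ∫ β in Ioi 1, gaussianWeight ν (r ^ 2) β ≤ 1 ^ (-ν) / ν :=
          integral_gaussianWeight_le_rpow hν (sq_nonneg r) le_rfl
      _ ≤ _ := by rw [one_rpow]; linarith
  · have hint := integrableOn_gaussianWeight hν (sq_nonneg r)
    rw [max_eq_right hr1, ← Ioc_union_Ioi_eq_Ioi hr1, setIntegral_union (Ioc_disjoint_Ioi le_rfl)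
      measurableSet_Ioi (hint.mono_set Ioc_subset_Ioi_self) (hint.mono_set (Ioi_subset_Ioi hr1))]
    calc _ ≤ n ! / π ^ n / (2 * n - ν) * r ^ (-ν) + r ^ (-ν) / ν :=
          add_le_add (integral_Ioc_gaussianWeight_le hn hr1)
            (integral_gaussianWeight_le_rpow hν (sq_nonneg r) hr1)
      _ = _ := by ring

end integral

lemma one_add_rpow_neg_le_max_one_rpow_neg {ν r : ℝ} (hν : 0 ≤ ν) (hr : 0 ≤ r) :
    (1 + r) ^ (-ν) ≤ max 1 r ^ (-ν) :=
  rpow_le_rpow_of_nonpos (by positivity) (max_le (by linarith) (by linarith)) (by linarith)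

lemma max_one_rpow_neg_le_two_rpow_mul {ν r : ℝ} (hν : 0 ≤ ν) (hr : 0 ≤ r) :
    max 1 r ^ (-ν) ≤ 2 ^ ν * (1 + r) ^ (-ν) := by
  have h : 2 ^ ν * (1 + r) ^ (-ν) = ((1 + r) / 2) ^ (-ν) := by
    rw [div_rpow (by positivity) zero_le_two, rpow_neg zero_le_two, div_inv_eq_mul, mul_comm]
  rw [h]
  refine rpow_le_rpow_of_nonpos (by positivity) ?_ (by linarith)
  have := le_max_left 1 r
  have := le_max_right 1 r
  linarith

theorem gaussian_superposition_comparable (ν : ℝ) (hν : 0 < ν) :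
    ∃ c C : ℝ, 0 < c ∧ c ≤ C ∧
      ∀ d : ℕ, 1 ≤ d → ∀ x : Fin d → ℝ,
        c * (1 + Real.sqrt (∑ i, x i ^ 2)) ^ (-ν) ≤
            (∫ β in Set.Ioi (1 : ℝ),
              Real.exp (-Real.pi * β⁻¹ ^ 2 * ∑ i, x i ^ 2) * β ^ (-ν - 1)) ∧
          (∫ β in Set.Ioi (1 : ℝ),
              Real.exp (-Real.pi * β⁻¹ ^ 2 * ∑ i, x i ^ 2) * β ^ (-ν - 1)) ≤
            C * (1 + Real.sqrt (∑ i, x i ^ 2)) ^ (-ν) := by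
  obtain ⟨n, hn⟩ : ∃ n : ℕ, ν < 2 * n := by
    obtain ⟨n, hn⟩ := exists_nat_gt ν
    exact ⟨n, by linarith⟩
  set A : ℝ := n ! / π ^ n / (2 * n - ν) + 1 / ν
  have hA : exp (-π) / ν ≤ A := by
    have : 0 ≤ (n ! / π ^ n / (2 * n - ν) : ℝ) := div_nonneg (by positivity) (by linarith)
    have : exp (-π) / ν ≤ 1 / ν := by gcongr; exact exp_le_one_iff.mpr (by linarith [pi_pos])
    linarith
  have hA0 : 0 ≤ A := (by positivity : 0 < exp (-π) / ν).le.trans hA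
  refine ⟨exp (-π) / ν, 2 ^ ν * A, by positivity,
    hA.trans (le_mul_of_one_le_left hA0 (one_le_rpow one_le_two hν.le)), ?_⟩
  intro d _ x
  set r := √(∑ i, x i ^ 2)
  have hr : 0 ≤ r := sqrt_nonneg _
  rw [← sq_sqrt (Finset.sum_nonneg fun i _ => sq_nonneg (x i))]
  constructor
  · calc exp (-π) / ν * (1 + r) ^ (-ν) ≤ exp (-π) / ν * max 1 r ^ (-ν) :=
          mul_le_mul_of_nonneg_left (one_add_rpow_neg_le_max_one_rpow_neg hν.le hr)
            (by positivity)
      _ ≤ _ := exp_neg_pi_div_mul_rpow_le_integral_gaussianWeight hν hr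
  · calc _ ≤ A * max 1 r ^ (-ν) := integral_gaussianWeight_le_max_one_rpow hν hn
      _ ≤ A * (2 ^ ν * (1 + r) ^ (-ν)) :=
          mul_le_mul_of_nonneg_left (max_one_rpow_neg_le_two_rpow_mul hν.le hr) hA0
      _ = 2 ^ ν * A * (1 + r) ^ (-ν) := by ring
end

section
/- Let d, k, p be positive integers with p ≤ k − 1. There exists a measurable set A ⊆ ℝ^d with positive upper Banach density δ̄_d(A) > 0 such that no λ₀ > 0 has the property that for every real λ ≥ λ₀ there exist x, s ∈ ℝ^d with x + js ∈ A for all j = 0, 1, …, k−1 and ‖s‖_{ℓ^p} = λ. In other words, for every λ₀ > 0 there is some λ ≥ λ₀ which is not the ℓ^p-norm of the common difference of any k-term arithmetic progression contained in A. -/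
/-!
Take `A = Bᵈ` with `B = {t | frac (t ^ p) < ε}`. Since `t ^ p` passes through every interval
`[n, n + ε)` and `t ↦ t ^ (1 / p)` is concave, `B` occupies a proportion at least `ε` of every
`[0, M]`, so `A` has upper Banach density at least `εᵈ`. Conversely, the `p`-th finite difference
of `j ↦ (a + j b) ^ p` is `p! bᵖ`, so if `a + j b ∈ B` for `j ≤ p` then `p! |b|ᵖ` lies within
`2ᵖ ε` of an integer. Summing over coordinates, for an AP in `A` of length `p + 1` the number
`p! ‖s‖ₚᵖ` lies within `d 2ᵖ ε < 1 / 2` of an integer, which rules out the norms `λ` with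
`p! λᵖ ∈ ℤ + 1 / 2`; these are unbounded.
-/

open MeasureTheory Filter
open scoped ENNReal

/-- The `ℓ^p` norm of a vector in `ℝ^d`. -/
noncomputable def lpNorm {d : ℕ} (p : ℝ) (s : Fin d → ℝ) : ℝ :=
  (∑ i, |s i| ^ p) ^ (1 / p)

/-- Upper Banach density of a subset of `ℝ^d`. -/
noncomputable def upperBanachDensity (d : ℕ) (A : Set (Fin d → ℝ)) : ℝ≥0∞ :=
  Filter.limsup (fun N : ℝ =>
    ⨆ x : Fin d → ℝ,
      volume (A ∩ Set.Icc x (x + fun _ => N)) / ENNReal.ofReal (N ^ d)) Filter.atTop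

open Finset Nat fwdDiff

lemma fwdDiff_iter_comp_mul {R G : Type*} [CommRing R] [AddCommGroup G] (f : R → G) (h : R)
    (n : ℕ) (y : R) :
    Δ_[1] ^[n] (fun t ↦ f (h * t)) y = Δ_[h] ^[n] f (h * y) := by
  simp [fwdDiff_iter_eq_sum_shift, mul_add, mul_comm]

lemma fwdDiff_zero_iter_succ {M G : Type*} [AddCommMonoid M] [AddCommGroup G] (f : M → G)
    (n : ℕ) :
    Δ_[0] ^[n + 1] f = 0 := by
  have hzero : Δ_[(0 : M)] f = 0 := by ext; simp [fwdDiff]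
  rw [Function.iterate_succ_apply, hzero]
  exact Function.iterate_fixed (fwdDiff_const 0 0) n

lemma fwdDiff_iter_pow_eq_factorial_mul_pow {K : Type*} [Field K] (h : K) (n : ℕ) :
    Δ_[h] ^[n] (fun t : K ↦ t ^ n) = fun _ ↦ n ! * h ^ n := by
  rcases eq_or_ne h 0 with rfl | hh
  · cases n with
    | zero => simp
    | succ n => ext; simp [fwdDiff_zero_iter_succ]
  · ext y
    have hscale : (fun t : K ↦ (h * t) ^ n) = h ^ n • fun t ↦ t ^ n := by ext; simp [mul_pow]
    have := fwdDiff_iter_comp_mul (fun t : K ↦ t ^ n) h n (y / h)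
    rw [mul_div_cancel₀ y hh, hscale, fwdDiff_iter_const_smul, fwdDiff_iter_eq_factorial] at this
    simpa [mul_comm] using this.symm

lemma exists_int_abs_factorial_mul_pow_sub_le {a b ε : ℝ} {n : ℕ}
    (h : ∀ j ≤ n, Int.fract ((a + j * b) ^ n) < ε) :
    ∃ z : ℤ, |n ! * b ^ n - z| ≤ 2 ^ n * ε := by
  set c : ℕ → ℤ := fun j ↦ (-1) ^ (n - j) * n.choose j
  have hnewton : (n ! * b ^ n : ℝ) = ∑ j ∈ range (n + 1), c j * (a + j * b) ^ n := by
    have := fwdDiff_iter_eq_sum_shift b (fun t : ℝ ↦ t ^ n) n a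
    rw [fwdDiff_iter_pow_eq_factorial_mul_pow] at this
    simpa [c] using this
  refine ⟨∑ j ∈ range (n + 1), c j * ⌊(a + j * b) ^ n⌋, ?_⟩
  calc |n ! * b ^ n - (∑ j ∈ range (n + 1), c j * ⌊(a + j * b) ^ n⌋ : ℤ)|
      = |∑ j ∈ range (n + 1), c j * Int.fract ((a + j * b) ^ n)| := by
        rw [hnewton]; push_cast; simp only [Int.fract, mul_sub, sum_sub_distrib]
    _ ≤ ∑ j ∈ range (n + 1), n.choose j * ε := by
        refine (abs_sum_le_sum_abs _ _).trans (sum_le_sum fun j hj ↦ ?_)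
        rw [abs_mul, abs_of_nonneg (Int.fract_nonneg ((a + j * b) ^ n))]
        have hc : |(c j : ℝ)| = n.choose j := by simp [c]
        rw [hc]
        exact mul_le_mul_of_nonneg_left (h j (Nat.lt_succ_iff.mp (mem_range.mp hj))).le
          (Nat.cast_nonneg _)
    _ = 2 ^ n * ε := by rw [← sum_mul, ← Nat.cast_sum, Nat.sum_range_choose]; push_cast; rfl

lemma exists_int_abs_sum_sub_le {ι : Type*} (s : Finset ι) (f : ι → ℝ) {δ : ℝ}
    (h : ∀ i ∈ s, ∃ z : ℤ, |f i - z| ≤ δ) : ∃ z : ℤ, |∑ i ∈ s, f i - z| ≤ #s * δ := by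
  choose! z hz using h
  refine ⟨∑ i ∈ s, z i, ?_⟩
  calc |∑ i ∈ s, f i - ((∑ i ∈ s, z i : ℤ) : ℝ)| = |∑ i ∈ s, (f i - z i)| := by
        push_cast; rw [sum_sub_distrib]
    _ ≤ ∑ i ∈ s, |f i - z i| := abs_sum_le_sum_abs _ _
    _ ≤ #s * δ := by simpa using sum_le_sum hz

lemma half_le_abs_add_half_sub (m z : ℤ) : 1 / 2 ≤ |(m : ℝ) + 1 / 2 - z| := by
  rcases le_or_gt z m with hzm | hmz
  · have : (z : ℝ) ≤ m := by exact_mod_cast hzm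
    rw [abs_of_nonneg (by linarith)]; linarith
  · have : (m : ℝ) + 1 ≤ z := by exact_mod_cast hmz
    rw [abs_of_neg (by linarith)]; linarith

lemma exists_ge_mul_pow_eq_add_half {c : ℝ} (hc : 0 < c) {n : ℕ} (hn : n ≠ 0) (lam0 : ℝ) :
    ∃ lam ≥ lam0, ∃ m : ℤ, c * lam ^ n = m + 1 / 2 := by
  set m : ℕ := ⌈c * |lam0| ^ n⌉₊
  have hm : c * |lam0| ^ n ≤ m := Nat.le_ceil _
  have hpow : (((m + 1 / 2) / c) ^ (n⁻¹ : ℝ)) ^ n = (m + 1 / 2) / c :=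
    Real.rpow_inv_natCast_pow (by positivity) hn
  refine ⟨((m + 1 / 2) / c) ^ (n⁻¹ : ℝ), ?_, m, by rw [hpow]; field_simp; push_cast; ring⟩
  refine (le_abs_self lam0).trans ((pow_le_pow_iff_left₀ (abs_nonneg _) (by positivity) hn).mp ?_)
  rw [hpow, le_div_iff₀ hc]
  linarith

lemma lpNorm_natCast_pow {d p : ℕ} (hp : p ≠ 0) (s : Fin d → ℝ) :
    lpNorm p s ^ p = ∑ i, |s i| ^ p := by
  simp only [_root_.lpNorm, Real.rpow_natCast, one_div]
  exact Real.rpow_inv_natCast_pow (sum_nonneg fun i _ ↦ by positivity) hp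

lemma ConcaveOn.mul_sub_le_apply_add_sub {s : Set ℝ} {f : ℝ → ℝ} (hf : ConcaveOn ℝ s f)
    {x y ε : ℝ} (hx : x ∈ s) (hy : y ∈ s) (hε0 : 0 ≤ ε) (hε1 : ε ≤ 1) :
    ε * (f y - f x) ≤ f (x + ε * (y - x)) - f x := by
  have := hf.2 hx hy (sub_nonneg.mpr hε1) hε0 (sub_add_cancel 1 ε)
  simp only [smul_eq_mul] at this
  rw [show (1 - ε) * x + ε * y = x + ε * (y - x) by ring] at this
  linarith

def fractPowLt (p : ℕ) (ε : ℝ) : Set ℝ := {t | Int.fract (t ^ p) < ε}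

lemma measurableSet_fractPowLt (p : ℕ) (ε : ℝ) : MeasurableSet (fractPowLt p ε) :=
  (measurable_id.pow_const p).fract measurableSet_Iio

lemma exists_int_abs_factorial_mul_abs_pow_sub_le {a b ε : ℝ} {n : ℕ}
    (h : ∀ j ≤ n, a + j * b ∈ fractPowLt n ε) :
    ∃ z : ℤ, |n ! * |b| ^ n - z| ≤ 2 ^ n * ε := by
  obtain ⟨z, hz⟩ := exists_int_abs_factorial_mul_pow_sub_le h
  refine ⟨|z|, le_trans ?_ hz⟩
  have : (n ! * |b| ^ n : ℝ) = |n ! * b ^ n| := by simp [abs_mul, abs_pow]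
  rw [this, Int.cast_abs]
  exact abs_abs_sub_abs_le_abs_sub _ _

lemma exists_int_abs_factorial_mul_lpNorm_pow_sub_le {d p : ℕ} (hp : p ≠ 0) {ε : ℝ}
    {x s : Fin d → ℝ} (h : ∀ j ≤ p, x + (j : ℝ) • s ∈ Set.univ.pi fun _ ↦ fractPowLt p ε) :
    ∃ z : ℤ, |p ! * lpNorm p s ^ p - z| ≤ d * (2 ^ p * ε) := by
  rw [lpNorm_natCast_pow hp, mul_sum]
  simpa using exists_int_abs_sum_sub_le univ (fun i ↦ p ! * |s i| ^ p) fun i _ ↦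
    exists_int_abs_factorial_mul_abs_pow_sub_le fun j hj ↦ Set.mem_univ_pi.mp (h j hj) i

lemma Ico_rpow_inv_subset_fractPowLt {p : ℕ} (hp : p ≠ 0) (n : ℕ) {ε : ℝ} (hε : 0 ≤ ε) :
    Set.Ico ((n : ℝ) ^ (p⁻¹ : ℝ)) ((n + ε) ^ (p⁻¹ : ℝ)) ⊆ fractPowLt p ε := by
  rintro t ⟨hnt, htε⟩
  have ht : 0 ≤ t := (Real.rpow_nonneg n.cast_nonneg _).trans hnt
  have hlow : (n : ℝ) ≤ t ^ p := by
    simpa [Real.rpow_inv_natCast_pow n.cast_nonneg hp] using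
      pow_le_pow_left₀ (by positivity) hnt p
  have hup : t ^ p < n + ε := by
    simpa [Real.rpow_inv_natCast_pow (by positivity : (0 : ℝ) ≤ n + ε) hp] using
      pow_lt_pow_left₀ htε ht hp
  have hfloor : (n : ℤ) ≤ ⌊t ^ p⌋ := Int.le_floor.mpr (by exact_mod_cast hlow)
  have : ((n : ℤ) : ℝ) ≤ ⌊t ^ p⌋ := by exact_mod_cast hfloor
  show t ^ p - ⌊t ^ p⌋ < ε
  push_cast at this
  linarith

lemma ofReal_mul_le_volume_fractPowLt_inter_Icc {p : ℕ} (hp : p ≠ 0) {ε : ℝ} (hε0 : 0 ≤ ε)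
    (hε1 : ε ≤ 1) (M : ℕ) :
    ENNReal.ofReal (ε * M) ≤ volume (fractPowLt p ε ∩ Set.Icc 0 (M : ℝ)) := by
  set r : ℝ → ℝ := fun y ↦ y ^ (p⁻¹ : ℝ)
  have hr_mono : ∀ {y z : ℝ}, 0 ≤ y → y ≤ z → r y ≤ r z := fun hy hyz ↦
    Real.rpow_le_rpow hy hyz (by positivity)
  have hr_pow : ∀ m : ℕ, r ((m : ℝ) ^ p) = m := fun m ↦
    Real.pow_rpow_inv_natCast m.cast_nonneg hp
  have hr_concave : ConcaveOn ℝ (Set.Ici 0) r :=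
    Real.concaveOn_rpow (by positivity)
      (inv_le_one_of_one_le₀ (by exact_mod_cast Nat.one_le_iff_ne_zero.mpr hp))
  have hgap : ∀ n : ℕ, ε * (r (n + 1) - r n) ≤ r (n + ε) - r n := fun n ↦ by
    simpa using hr_concave.mul_sub_le_apply_add_sub (x := n) (y := n + 1)
      (Set.mem_Ici.mpr n.cast_nonneg) (Set.mem_Ici.mpr (by positivity)) hε0 hε1
  have hsub : ∀ n ∈ range (M ^ p),
      Set.Ico (r n) (r (n + ε)) ⊆ fractPowLt p ε ∩ Set.Icc 0 (M : ℝ) := fun n hn t ht ↦ by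
    refine ⟨Ico_rpow_inv_subset_fractPowLt hp n hε0 ht,
      (Real.rpow_nonneg n.cast_nonneg _).trans ht.1, ?_⟩
    calc t ≤ r (n + ε) := ht.2.le
      _ ≤ r ((M : ℝ) ^ p) := hr_mono (by positivity) <| by
          have : n + 1 ≤ M ^ p := mem_range.mp hn
          have : (n : ℝ) + 1 ≤ (M : ℝ) ^ p := by exact_mod_cast this
          linarith
      _ = M := hr_pow M
  have hdisj :
      Set.PairwiseDisjoint (range (M ^ p) : Set ℕ) fun n ↦ Set.Ico (r n) (r (n + ε)) := by
    refine Pairwise.set_pairwise ((pairwise_disjoint_on _).mpr fun m n hmn ↦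
      Set.Ico_disjoint_Ico_same.mono_right (Set.Ico_subset_Ico_left (hr_mono (by positivity) ?_))) _
    have : (m : ℝ) + 1 ≤ n := by exact_mod_cast hmn
    linarith
  calc ENNReal.ofReal (ε * M)
      = ENNReal.ofReal (∑ n ∈ range (M ^ p), ε * (r (n + 1) - r n)) := by
        have htelescope := sum_range_sub (fun n : ℕ ↦ r n) (M ^ p)
        push_cast at htelescope
        rw [← mul_sum, htelescope]
        simp [r, hr_pow, Real.zero_rpow (inv_ne_zero (Nat.cast_ne_zero.mpr hp))]
    _ ≤ ∑ n ∈ range (M ^ p), volume (Set.Ico (r n) (r (n + ε))) := by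
        simp only [Real.volume_Ico]
        rw [← ENNReal.ofReal_sum_of_nonneg fun n _ ↦
          sub_nonneg.mpr (hr_mono n.cast_nonneg (by linarith))]
        exact ENNReal.ofReal_le_ofReal (sum_le_sum fun n _ ↦ hgap n)
    _ = volume (⋃ n ∈ range (M ^ p), Set.Ico (r n) (r (n + ε))) :=
        (measure_biUnion_finset hdisj fun n _ ↦ measurableSet_Ico).symm
    _ ≤ volume (fractPowLt p ε ∩ Set.Icc 0 (M : ℝ)) := measure_mono (Set.iUnion₂_subset hsub)

lemma ofReal_pow_le_upperBanachDensity_univ_pi {d : ℕ} {B : Set ℝ} {c : ℝ} (hc : 0 ≤ c)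
    (hB : ∀ M : ℕ, ENNReal.ofReal (c * M) ≤ volume (B ∩ Set.Icc 0 (M : ℝ))) :
    ENNReal.ofReal (c ^ d) ≤ upperBanachDensity d (Set.univ.pi fun _ ↦ B) := by
  refine le_limsup_of_frequently_le' (frequently_atTop.mpr fun a ↦ ?_)
  obtain ⟨M, haM, hM⟩ : ∃ M : ℕ, a ≤ M ∧ 0 < M :=
    ⟨⌈a⌉₊ + 1, by push_cast; linarith [Nat.le_ceil a], by omega⟩
  refine ⟨M, haM, le_iSup_of_le 0 ?_⟩
  have hbox : (Set.univ.pi fun _ ↦ B) ∩ Set.Icc (0 : Fin d → ℝ) (0 + fun _ ↦ (M : ℝ)) =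
      Set.univ.pi fun _ ↦ B ∩ Set.Icc 0 (M : ℝ) := by
    rw [zero_add, ← Set.pi_univ_Icc, ← Set.pi_inter_distrib]; rfl
  rw [hbox, volume_pi_pi, Finset.prod_const, Finset.card_univ, Fintype.card_fin,
    ENNReal.le_div_iff_mul_le (Or.inl (by positivity)) (Or.inl ENNReal.ofReal_ne_top),
    ← ENNReal.ofReal_mul (by positivity), ← mul_pow, ENNReal.ofReal_pow (by positivity)]
  exact pow_le_pow_left' (hB M) d

theorem counterexample_integer_exponents_general (d k p : ℕ)
    (hp : 1 ≤ p) (hpk : p ≤ k - 1) :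
    ∃ A : Set (Fin d → ℝ), MeasurableSet A ∧ 0 < upperBanachDensity d A ∧
      ∀ lam0 : ℝ, 0 < lam0 → ∃ lam : ℝ, lam0 ≤ lam ∧
        ¬ ∃ x s : Fin d → ℝ,
            (∀ j : ℕ, j ≤ k - 1 → x + (j : ℝ) • s ∈ A) ∧ lpNorm (p : ℝ) s = lam := by
  have hp0 : p ≠ 0 := Nat.one_le_iff_ne_zero.mp hp
  set ε : ℝ := 1 / (2 ^ (p + 1) * (d + 1))
  have hε0 : 0 < ε := by positivity
  have hε1 : ε ≤ 1 := div_le_one_of_le₀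
    (one_le_mul_of_one_le_of_one_le (one_le_pow₀ one_le_two) (le_add_of_nonneg_left d.cast_nonneg))
    (by positivity)
  have hsmall : d * (2 ^ p * ε) < 1 / 2 := by
    rw [show d * (2 ^ p * ε) = d / (d + 1) / 2 by simp only [ε]; field_simp; ring]
    gcongr
    exact (div_lt_one (by positivity)).mpr (by linarith)
  refine ⟨Set.univ.pi fun _ ↦ fractPowLt p ε,
    MeasurableSet.univ_pi fun _ ↦ measurableSet_fractPowLt p ε, ?_, ?_⟩
  · exact (ENNReal.ofReal_pos.mpr (by positivity)).trans_le <|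
      ofReal_pow_le_upperBanachDensity_univ_pi hε0.le <|
        ofReal_mul_le_volume_fractPowLt_inter_Icc hp0 hε0.le hε1
  · intro lam0 _
    obtain ⟨lam, hlam, m, hm⟩ :=
      exists_ge_mul_pow_eq_add_half (Nat.cast_pos.mpr (factorial_pos p)) hp0 lam0
    refine ⟨lam, hlam, ?_⟩
    rintro ⟨x, s, hAP, rfl⟩
    obtain ⟨z, hz⟩ :=
      exists_int_abs_factorial_mul_lpNorm_pow_sub_le hp0 fun j hj ↦ hAP j (hj.trans hpk)
    rw [hm] at hz
    linarith [half_le_abs_add_half_sub m z]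

theorem counterexample_integer_exponents (d k p : ℕ)
    (hd : 1 ≤ d) (hk : 1 ≤ k) (hp : 1 ≤ p) (hpk : p ≤ k - 1) :
    ∃ A : Set (Fin d → ℝ), MeasurableSet A ∧ 0 < upperBanachDensity d A ∧
      ∀ lam0 : ℝ, 0 < lam0 → ∃ lam : ℝ, lam0 ≤ lam ∧
        ¬ ∃ x s : Fin d → ℝ,
            (∀ j : ℕ, j ≤ k - 1 → x + (j : ℝ) • s ∈ A) ∧ lpNorm (p : ℝ) s = lam :=
  counterexample_integer_exponents_general d k p hp hpk
end
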